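/- Let G be a bipartite graph on finite buyer set B and seller set S with strictly positive demands and supplies such that within every connected component total supply equals total demand. Then G is successful (every trading session is feasible) if and only if every connected component of G is complete bipartite. -/

import Mathlib

/-!
Complete components are successful: a buyer still unserved at the end of a session has traded
with every seller of its component, so all of them are exhausted; but a session preserves the
excess demand of every component, which starts at zero, so the buyer is served after all.

Conversely, success passes from an instance to the instance left after any single trade, which
has fewer links, so one argues by induction. In a minimal counterexample with an induced path
`b - t - u - s` (`b` and `s` not linked), every trade off the path must exhaust one of its four
traders, or the path would survive into the smaller instance. This forces every link to touch the
path and leaves a few configurations, each defeated by an explicit session of one or two opening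
trades that starves a trader.
-/

open scoped Classical

structure TState (B S : Type*) where
  dem : B → ℝ
  sup : S → ℝ

/-- One trade on link `(b, s)`: the maximal amount `min (dem b) (sup s)` is
transferred, leaving demand `max 0 (dem b - sup s)` and supply
`max 0 (sup s - dem b)`; all other values are unchanged. -/
def trade {B S : Type*} [DecidableEq B] [DecidableEq S]
    (st : TState B S) (l : B × S) : TState B S where
  dem := Function.update st.dem l.1 (max 0 (st.dem l.1 - st.sup l.2))
  sup := Function.update st.sup l.2 (max 0 (st.sup l.2 - st.dem l.1))

def runSession {B S : Type*} [DecidableEq B] [DecidableEq S]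
    (st : TState B S) (seq : List (B × S)) : TState B S :=
  seq.foldl trade st

def linkGraph {B S : Type*} (L : Finset (B × S)) : SimpleGraph (B ⊕ S) where
  Adj v w := ∃ p ∈ L, (v = Sum.inl p.1 ∧ w = Sum.inr p.2) ∨ (v = Sum.inr p.2 ∧ w = Sum.inl p.1)
  symm := ⟨by rintro v w ⟨p, hp, h | h⟩ <;> exact ⟨p, hp, by tauto⟩⟩
  loopless := ⟨by rintro v ⟨p, hp, ⟨rfl, h⟩ | ⟨rfl, h⟩⟩ <;> simp_all⟩

def TState.Nonneg {B S : Type*} (st : TState B S) : Prop :=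
  (∀ b, 0 ≤ st.dem b) ∧ ∀ s, 0 ≤ st.sup s

section Trading

variable {B S : Type*} [DecidableEq B] [DecidableEq S] {st : TState B S}

@[simp] lemma trade_dem_self (st : TState B S) (b : B) (s : S) :
    (trade st (b, s)).dem b = max 0 (st.dem b - st.sup s) :=
  Function.update_self _ _ _

@[simp] lemma trade_sup_self (st : TState B S) (b : B) (s : S) :
    (trade st (b, s)).sup s = max 0 (st.sup s - st.dem b) :=
  Function.update_self _ _ _

@[simp] lemma trade_dem_of_ne (st : TState B S) {x b : B} (s : S) (h : x ≠ b) :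
    (trade st (b, s)).dem x = st.dem x :=
  Function.update_of_ne h _ _

@[simp] lemma trade_sup_of_ne (st : TState B S) (b : B) {y s : S} (h : y ≠ s) :
    (trade st (b, s)).sup y = st.sup y :=
  Function.update_of_ne h _ _

lemma runSession_cons (st : TState B S) (l : B × S) (σ : List (B × S)) :
    runSession st (l :: σ) = runSession (trade st l) σ := rfl

lemma runSession_append (st : TState B S) (σ τ : List (B × S)) :
    runSession st (σ ++ τ) = runSession (runSession st σ) τ :=
  List.foldl_append

lemma TState.Nonneg.trade (hst : st.Nonneg) (l : B × S) : (trade st l).Nonneg := by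
  obtain ⟨b, s⟩ := l
  refine ⟨fun x => ?_, fun y => ?_⟩
  · rcases eq_or_ne x b with rfl | h <;> simp [*, hst.1 x]
  · rcases eq_or_ne y s with rfl | h <;> simp [*, hst.2 y]

lemma TState.Nonneg.runSession (hst : st.Nonneg) (σ : List (B × S)) :
    (runSession st σ).Nonneg := by
  induction σ generalizing st with
  | nil => exact hst
  | cons l σ ih => exact ih (hst.trade l)

lemma trade_dem_le (hst : st.Nonneg) (l : B × S) (x : B) : (trade st l).dem x ≤ st.dem x := by
  obtain ⟨b, s⟩ := l
  rcases eq_or_ne x b with rfl | h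
  · simpa using ⟨hst.1 x, hst.2 s⟩
  · simp [h]

lemma trade_sup_le (hst : st.Nonneg) (l : B × S) (y : S) : (trade st l).sup y ≤ st.sup y := by
  obtain ⟨b, s⟩ := l
  rcases eq_or_ne y s with rfl | h
  · simpa using ⟨hst.2 y, hst.1 b⟩
  · simp [h]

lemma runSession_dem_le (hst : st.Nonneg) (σ : List (B × S)) (x : B) :
    (runSession st σ).dem x ≤ st.dem x := by
  induction σ generalizing st with
  | nil => exact le_rfl
  | cons l σ ih => exact (ih (hst.trade l)).trans (trade_dem_le hst l x)

lemma runSession_sup_le (hst : st.Nonneg) (σ : List (B × S)) (y : S) :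
    (runSession st σ).sup y ≤ st.sup y := by
  induction σ generalizing st with
  | nil => exact le_rfl
  | cons l σ ih => exact (ih (hst.trade l)).trans (trade_sup_le hst l y)

lemma runSession_dem_eq_zero (hst : st.Nonneg) {x : B} (hx : st.dem x = 0)
    (σ : List (B × S)) : (runSession st σ).dem x = 0 :=
  le_antisymm (hx ▸ runSession_dem_le hst σ x) ((hst.runSession σ).1 x)

lemma runSession_sup_eq_zero (hst : st.Nonneg) {y : S} (hy : st.sup y = 0)
    (σ : List (B × S)) : (runSession st σ).sup y = 0 :=
  le_antisymm (hy ▸ runSession_sup_le hst σ y) ((hst.runSession σ).2 y)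

lemma trade_eq_self (hst : st.Nonneg) {l : B × S} (hl : st.dem l.1 = 0 ∨ st.sup l.2 = 0) :
    trade st l = st := by
  obtain ⟨b, s⟩ := l
  have hb := hst.1 b
  have hs := hst.2 s
  have hdem : max 0 (st.dem b - st.sup s) = st.dem b := by
    rcases hl with h | h <;> simp only at h <;> simp [h, hs, hb]
  have hsup : max 0 (st.sup s - st.dem b) = st.sup s := by
    rcases hl with h | h <;> simp only at h <;> simp [h, hs, hb]
  cases st
  simp only [trade, TState.mk.injEq]
  exact ⟨Function.update_eq_self_iff.mpr hdem, Function.update_eq_self_iff.mpr hsup⟩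

lemma runSession_eq_self (hst : st.Nonneg) {σ : List (B × S)}
    (hσ : ∀ l ∈ σ, st.dem l.1 = 0 ∨ st.sup l.2 = 0) : runSession st σ = st := by
  induction σ with
  | nil => rfl
  | cons l σ ih =>
    rw [runSession_cons, trade_eq_self hst (hσ l List.mem_cons_self)]
    exact ih fun p hp => hσ p (List.mem_cons_of_mem _ hp)

lemma runSession_dem_of_forall_ne {σ : List (B × S)} {x : B} (hσ : ∀ l ∈ σ, l.1 ≠ x) :
    (runSession st σ).dem x = st.dem x := by
  induction σ generalizing st with
  | nil => rfl
  | cons l σ ih =>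
    rw [runSession_cons, ih fun p hp => hσ p (List.mem_cons_of_mem _ hp)]
    exact trade_dem_of_ne st l.2 (hσ l List.mem_cons_self).symm

lemma runSession_sup_of_forall_ne {σ : List (B × S)} {y : S} (hσ : ∀ l ∈ σ, l.2 ≠ y) :
    (runSession st σ).sup y = st.sup y := by
  induction σ generalizing st with
  | nil => rfl
  | cons l σ ih =>
    rw [runSession_cons, ih fun p hp => hσ p (List.mem_cons_of_mem _ hp)]
    exact trade_sup_of_ne st l.1 (hσ l List.mem_cons_self).symm

lemma runSession_dem_of_forall_sup_eq_zero (hst : st.Nonneg) {σ : List (B × S)} {x : B}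
    {y : S} (hy : st.sup y = 0) (hσ : ∀ l ∈ σ, l.1 = x → l.2 = y) :
    (runSession st σ).dem x = st.dem x := by
  induction σ generalizing st with
  | nil => rfl
  | cons l σ ih =>
    obtain ⟨b, s⟩ := l
    have hx : (trade st (b, s)).dem x = st.dem x := by
      rcases eq_or_ne x b with rfl | hxb
      · obtain rfl : s = y := hσ _ List.mem_cons_self rfl
        simp [hy, hst.1 x]
      · exact trade_dem_of_ne st s hxb
    rw [runSession_cons, ← hx]
    refine ih (hst.trade _) (le_antisymm ?_ ((hst.trade _).2 y))
      fun p hp => hσ p (List.mem_cons_of_mem _ hp)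
    exact hy ▸ trade_sup_le hst _ y

lemma runSession_sup_of_forall_dem_eq_zero (hst : st.Nonneg) {σ : List (B × S)} {x : B}
    {y : S} (hx : st.dem x = 0) (hσ : ∀ l ∈ σ, l.2 = y → l.1 = x) :
    (runSession st σ).sup y = st.sup y := by
  induction σ generalizing st with
  | nil => rfl
  | cons l σ ih =>
    obtain ⟨b, s⟩ := l
    have hy : (trade st (b, s)).sup y = st.sup y := by
      rcases eq_or_ne y s with rfl | hys
      · obtain rfl : b = x := hσ _ List.mem_cons_self rfl
        simp [hx, hst.2 y]
      · exact trade_sup_of_ne st b hys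
    rw [runSession_cons, ← hy]
    refine ih (hst.trade _) (le_antisymm ?_ ((hst.trade _).1 x))
      fun p hp => hσ p (List.mem_cons_of_mem _ hp)
    exact hx ▸ trade_dem_le hst _ x

lemma runSession_dem_eq_zero_or_sup_eq_zero (hst : st.Nonneg) {σ : List (B × S)}
    {l : B × S} (hl : l ∈ σ) :
    (runSession st σ).dem l.1 = 0 ∨ (runSession st σ).sup l.2 = 0 := by
  induction σ generalizing st with
  | nil => cases hl
  | cons p σ ih =>
    rw [runSession_cons]
    rcases List.mem_cons.mp hl with rfl | hl
    · obtain ⟨b, s⟩ := l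
      rcases le_total (st.dem b) (st.sup s) with h | h
      · exact .inl (runSession_dem_eq_zero (hst.trade _) (by simpa using h) σ)
      · exact .inr (runSession_sup_eq_zero (hst.trade _) (by simpa using h) σ)
    · exact ih (hst.trade p) hl

lemma sum_trade_dem (st : TState B S) (l : B × S) (U : Finset B) :
    ∑ x ∈ U, (trade st l).dem x
      = ∑ x ∈ U, st.dem x - if l.1 ∈ U then min (st.dem l.1) (st.sup l.2) else 0 := by
  have : max 0 (st.dem l.1 - st.sup l.2) = st.dem l.1 - min (st.dem l.1) (st.sup l.2) := by
    rcases le_total (st.dem l.1) (st.sup l.2) with h | h <;> simp [h]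
  split_ifs with h
  · rw [trade, Finset.sum_update_of_mem h, this, ← Finset.add_sum_erase U _ h,
      Finset.sdiff_singleton_eq_erase]
    ring
  · rw [trade, Finset.sum_update_of_notMem h, sub_zero]

lemma sum_trade_sup (st : TState B S) (l : B × S) (V : Finset S) :
    ∑ y ∈ V, (trade st l).sup y
      = ∑ y ∈ V, st.sup y - if l.2 ∈ V then min (st.dem l.1) (st.sup l.2) else 0 := by
  have : max 0 (st.sup l.2 - st.dem l.1) = st.sup l.2 - min (st.dem l.1) (st.sup l.2) := by
    rcases le_total (st.dem l.1) (st.sup l.2) with h | h <;> simp [h]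
  split_ifs with h
  · rw [trade, Finset.sum_update_of_mem h, this, ← Finset.add_sum_erase V _ h,
      Finset.sdiff_singleton_eq_erase]
    ring
  · rw [trade, Finset.sum_update_of_notMem h, sub_zero]

lemma sum_dem_sub_sum_sup_runSession {U : Finset B} {V : Finset S} {σ : List (B × S)}
    (hσ : ∀ l ∈ σ, l.1 ∈ U ↔ l.2 ∈ V) :
    ∑ x ∈ U, (runSession st σ).dem x - ∑ y ∈ V, (runSession st σ).sup y
      = ∑ x ∈ U, st.dem x - ∑ y ∈ V, st.sup y := by
  induction σ generalizing st with
  | nil => rfl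
  | cons l σ ih =>
    rw [runSession_cons, ih fun p hp => hσ p (List.mem_cons_of_mem _ hp), sum_trade_dem,
      sum_trade_sup, if_congr (hσ l List.mem_cons_self) rfl rfl]
    ring

end Trading

section Reduction

variable {B S : Type*} [DecidableEq B] [DecidableEq S] {L : Finset (B × S)} {st : TState B S}
  {l : B × S}

def ClearsAll (L : Finset (B × S)) (st : TState B S) : Prop :=
  ∀ σ : List (B × S), σ.Perm L.toList →
    (∀ b, (runSession st σ).dem b = 0) ∧ ∀ s, (runSession st σ).sup s = 0

def PosOn (L : Finset (B × S)) (st : TState B S) : Prop :=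
  ∀ l ∈ L, 0 < st.dem l.1 ∧ 0 < st.sup l.2

/-- The instance left to play after the trade on `l`: links with an exhausted trader can no
longer trade and are dropped. -/
noncomputable def reduceAfter (L : Finset (B × S)) (st : TState B S) (l : B × S) :
    Finset (B × S) :=
  (L.erase l).filter fun p => 0 < (trade st l).dem p.1 ∧ 0 < (trade st l).sup p.2

lemma reduceAfter_ssubset (hl : l ∈ L) : reduceAfter L st l ⊂ L :=
  (Finset.filter_subset _ _).trans_ssubset (Finset.erase_ssubset hl)

lemma posOn_reduceAfter : PosOn (reduceAfter L st l) (trade st l) :=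
  fun _ hp => (Finset.mem_filter.mp hp).2

lemma mem_reduceAfter {p : B × S} (hp : p ∈ L) (hpl : p ≠ l) (hdem : 0 < (trade st l).dem p.1)
    (hsup : 0 < (trade st l).sup p.2) : p ∈ reduceAfter L st l :=
  Finset.mem_filter.mpr ⟨Finset.mem_erase.mpr ⟨hpl, hp⟩, hdem, hsup⟩

lemma ClearsAll.reduce (hgood : ClearsAll L st) (hst : st.Nonneg) (hl : l ∈ L) :
    ClearsAll (reduceAfter L st l) (trade st l) := by
  intro σ hσ
  set R := (L.erase l).filter fun p => ¬(0 < (trade st l).dem p.1 ∧ 0 < (trade st l).sup p.2)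
  have hperm : (l :: (σ ++ R.toList)).Perm L.toList := by
    rw [← Multiset.coe_eq_coe, ← Multiset.cons_coe, ← Multiset.coe_add,
      Multiset.coe_eq_coe.mpr hσ, Finset.coe_toList, Finset.coe_toList, Finset.coe_toList,
      _root_.reduceAfter, Finset.filter_val, Finset.filter_val, Multiset.filter_add_not,
      Finset.erase_val, Multiset.cons_erase hl]
  have hdead : ∀ p ∈ R.toList, (runSession (trade st l) σ).dem p.1 = 0 ∨
      (runSession (trade st l) σ).sup p.2 = 0 := by
    intro p hp
    have hst' := hst.trade l
    rcases not_and_or.mp (Finset.mem_filter.mp (Finset.mem_toList.mp hp)).2 with h | h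
    · exact .inl (runSession_dem_eq_zero hst' (le_antisymm (not_lt.mp h) (hst'.1 _)) σ)
    · exact .inr (runSession_sup_eq_zero hst' (le_antisymm (not_lt.mp h) (hst'.2 _)) σ)
  have := hgood _ hperm
  rwa [runSession_cons, runSession_append,
    runSession_eq_self ((hst.trade l).runSession σ) hdead] at this

end Reduction

section LinkGraph

variable {B S : Type*} {L : Finset (B × S)}

@[simp] lemma linkGraph_adj_inl_inr {b : B} {s : S} :
    (linkGraph L).Adj (.inl b) (.inr s) ↔ (b, s) ∈ L := by
  simp [linkGraph]

@[simp] lemma linkGraph_adj_inr_inl {b : B} {s : S} :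
    (linkGraph L).Adj (.inr s) (.inl b) ↔ (b, s) ∈ L := by
  simp [linkGraph]

@[simp] lemma linkGraph_not_adj_inl_inl {b b' : B} : ¬(linkGraph L).Adj (.inl b) (.inl b') := by
  simp [linkGraph]

@[simp] lemma linkGraph_not_adj_inr_inr {s s' : S} : ¬(linkGraph L).Adj (.inr s) (.inr s') := by
  simp [linkGraph]

/-- Closure under paths of length three; for a bipartite graph this says that every connected
component is complete bipartite. -/
def PathClosed (L : Finset (B × S)) : Prop :=
  ∀ ⦃b t u s⦄, (b, t) ∈ L → (u, t) ∈ L → (u, s) ∈ L → (b, s) ∈ L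

lemma PathClosed.mem_of_reachable (hL : PathClosed L) {b : B} {s : S}
    (h : (linkGraph L).Reachable (.inl b) (.inr s)) : (b, s) ∈ L := by
  have key : ∀ v, Relation.ReflTransGen (linkGraph L).Adj (.inl b) v →
      Sum.elim (fun u => u = b ∨ ∃ t, (b, t) ∈ L ∧ (u, t) ∈ L) (fun s => (b, s) ∈ L) v := by
    intro v hv
    induction hv with
    | refl => exact .inl rfl
    | @tail v w _ hadj ih =>
      rcases v with u | t <;> rcases w with u' | s' <;> simp only [linkGraph_adj_inl_inr,
        linkGraph_adj_inr_inl, linkGraph_not_adj_inl_inl, linkGraph_not_adj_inr_inr] at hadj <;>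
        simp only [Sum.elim_inl, Sum.elim_inr] at ih ⊢
      · rcases ih with rfl | ⟨t, hbt, hut⟩
        exacts [hadj, hL hbt hut hadj]
      · exact .inr ⟨t, ih, hadj⟩
  exact key _ ((SimpleGraph.reachable_iff_reflTransGen _ _).mp h)

end LinkGraph

section Sessions

variable {B S : Type*} [DecidableEq B] [DecidableEq S] {L : Finset (B × S)} {st : TState B S}

lemma perm_cons_toList_erase {l : B × S} (hl : l ∈ L) :
    (l :: (L.erase l).toList).Perm L.toList := by
  rw [← Multiset.coe_eq_coe, ← Multiset.cons_coe, Finset.coe_toList, Finset.coe_toList,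
    Finset.erase_val, Multiset.cons_erase hl]

lemma perm_cons_cons_toList_erase {l l' : B × S} (hl : l ∈ L) (hl' : l' ∈ L) (hne : l' ≠ l) :
    (l :: l' :: ((L.erase l).erase l').toList).Perm L.toList :=
  (List.Perm.cons l (perm_cons_toList_erase (Finset.mem_erase.mpr ⟨hne, hl'⟩))).trans
    (perm_cons_toList_erase hl)

/-- Otherwise the opening trade `(u, t)` exhausts `t` and starves `b`. -/
lemma ClearsAll.dem_lt_sup_of_sole_seller (hgood : ClearsAll L st) (hst : st.Nonneg)
    {b u : B} {t : S} (hut : (u, t) ∈ L) (hbu : b ≠ u) (hb : 0 < st.dem b)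
    (hsole : ∀ y, (b, y) ∈ L → y = t) : st.dem u < st.sup t := by
  by_contra! h
  have hfinal := (hgood _ (perm_cons_toList_erase hut)).1 b
  rw [runSession_cons, runSession_dem_of_forall_sup_eq_zero (hst.trade _) (y := t)
    (by simpa using h) (by
      rintro ⟨_, y⟩ hp rfl; exact hsole y (Finset.mem_of_mem_erase (Finset.mem_toList.mp hp))),
    trade_dem_of_ne _ _ hbu] at hfinal
  exact hb.ne' hfinal

lemma ClearsAll.sup_lt_dem_of_sole_buyer (hgood : ClearsAll L st) (hst : st.Nonneg)
    {u : B} {t s : S} (hut : (u, t) ∈ L) (hts : s ≠ t) (hs : 0 < st.sup s)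
    (hsole : ∀ x, (x, s) ∈ L → x = u) : st.sup t < st.dem u := by
  by_contra! h
  have hfinal := (hgood _ (perm_cons_toList_erase hut)).2 s
  rw [runSession_cons, runSession_sup_of_forall_dem_eq_zero (hst.trade _) (x := u)
    (by simpa using h) (by
      rintro ⟨x, _⟩ hp rfl; exact hsole x (Finset.mem_of_mem_erase (Finset.mem_toList.mp hp))),
    trade_sup_of_ne _ _ hts] at hfinal
  exact hs.ne' hfinal

/-- Otherwise the opening trades `(u, s)` and `(x, s)` leave `x` unserved. -/
lemma ClearsAll.dem_lt_sup_of_pendant (hgood : ClearsAll L st) {x u : B} {s : S}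
    (hus : (u, s) ∈ L) (hxs : (x, s) ∈ L) (hxu : x ≠ u) (hu : 0 < st.dem u)
    (hs : 0 < st.sup s) (hsole : ∀ y, (x, y) ∈ L → y = s) : st.dem x < st.sup s := by
  by_contra! h
  have hfinal := (hgood _ (perm_cons_cons_toList_erase hus hxs (by simpa using hxu))).1 x
  rw [runSession_cons, runSession_cons, runSession_dem_of_forall_ne ?_, trade_dem_self,
    trade_sup_self, trade_dem_of_ne _ _ hxu] at hfinal
  · have : max 0 (st.sup s - st.dem u) < st.dem x := max_lt (hs.trans_le h) (by linarith)
    exact (lt_max_of_lt_right (sub_pos.mpr this)).ne' hfinal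
  · rintro ⟨_, y⟩ hp rfl
    obtain ⟨hne, hp⟩ := Finset.mem_erase.mp (Finset.mem_toList.mp hp)
    exact hne (by rw [hsole y (Finset.mem_of_mem_erase hp)])

lemma ClearsAll.sup_lt_dem_of_pendant (hgood : ClearsAll L st) {b : B} {t y : S}
    (hbt : (b, t) ∈ L) (hby : (b, y) ∈ L) (hyt : y ≠ t) (hb : 0 < st.dem b)
    (ht : 0 < st.sup t) (hsole : ∀ x, (x, y) ∈ L → x = b) : st.sup y < st.dem b := by
  by_contra! h
  have hfinal := (hgood _ (perm_cons_cons_toList_erase hbt hby (by simpa using hyt))).2 y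
  rw [runSession_cons, runSession_cons, runSession_sup_of_forall_ne ?_, trade_sup_self,
    trade_dem_self, trade_sup_of_ne _ _ hyt] at hfinal
  · have : max 0 (st.dem b - st.sup t) < st.sup y := max_lt (hb.trans_le h) (by linarith)
    exact (lt_max_of_lt_right (sub_pos.mpr this)).ne' hfinal
  · rintro ⟨x, _⟩ hp rfl
    obtain ⟨hne, hp⟩ := Finset.mem_erase.mp (Finset.mem_toList.mp hp)
    exact hne (by rw [hsole x (Finset.mem_of_mem_erase hp)])

end Sessions

section InducedPath

variable {B S : Type*} {L : Finset (B × S)} {b u x : B} {t s y : S}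

def IsInducedPath (L : Finset (B × S)) (b : B) (t : S) (u : B) (s : S) : Prop :=
  (b, t) ∈ L ∧ (u, t) ∈ L ∧ (u, s) ∈ L ∧ (b, s) ∉ L

lemma IsInducedPath.buyer_ne (hP : IsInducedPath L b t u s) : b ≠ u := by
  rintro rfl; exact hP.2.2.2 hP.2.2.1

lemma IsInducedPath.seller_ne (hP : IsInducedPath L b t u s) : t ≠ s := by
  rintro rfl; exact hP.2.2.2 hP.1

variable [DecidableEq B] [DecidableEq S] {st : TState B S}

/-- In a minimal counterexample, every trade outside an induced path exhausts one of its
traders: otherwise the path survives into a smaller instance. -/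
lemma IsInducedPath.not_survives (hP : IsInducedPath L b t u s)
    (hmin : ∀ l ∈ L, PathClosed (reduceAfter L st l)) {l : B × S} (hl : l ∈ L)
    (hbt : l ≠ (b, t)) (hut : l ≠ (u, t)) (hus : l ≠ (u, s)) (hb : 0 < (trade st l).dem b)
    (ht : 0 < (trade st l).sup t) (hu : 0 < (trade st l).dem u)
    (hs : 0 < (trade st l).sup s) : False :=
  hP.2.2.2 <| (Finset.filter_subset _ _).trans (Finset.erase_subset _ _) <|
    hmin l hl (mem_reduceAfter hP.1 hbt.symm hb ht) (mem_reduceAfter hP.2.1 hut.symm hu ht)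
      (mem_reduceAfter hP.2.2.1 hus.symm hu hs)

lemma IsInducedPath.touches (hP : IsInducedPath L b t u s) (hpos : PosOn L st)
    (hmin : ∀ l ∈ L, PathClosed (reduceAfter L st l)) (hxy : (x, y) ∈ L) :
    x = b ∨ x = u ∨ y = t ∨ y = s := by
  by_contra! h
  obtain ⟨hxb, hxu, hyt, hys⟩ := h
  obtain ⟨hb, ht⟩ := hpos _ hP.1
  obtain ⟨hu, hs⟩ := hpos _ hP.2.2.1
  exact hP.not_survives hmin hxy (by simp [hxb]) (by simp [hxu]) (by simp [hxu])
    (by simpa [Ne.symm hxb]) (by simpa [Ne.symm hyt]) (by simpa [Ne.symm hxu])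
    (by simpa [Ne.symm hys])

lemma IsInducedPath.sup_le_dem (hP : IsInducedPath L b t u s) (hpos : PosOn L st)
    (hmin : ∀ l ∈ L, PathClosed (reduceAfter L st l)) (hxy : (x, y) ∈ L) (hxb : x ≠ b)
    (hxu : x ≠ u) (hy : y = t ∨ y = s) : st.sup y ≤ st.dem x := by
  by_contra! h
  obtain ⟨hb, ht⟩ := hpos _ hP.1
  obtain ⟨hu, hs⟩ := hpos _ hP.2.2.1
  have hy' : 0 < (trade st (x, y)).sup y := by simpa using h
  apply hP.not_survives hmin hxy (by simp [hxb]) (by simp [hxu]) (by simp [hxu])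
    (by simpa [Ne.symm hxb]) _ (by simpa [Ne.symm hxu])
  all_goals rcases hy with rfl | rfl
  all_goals first | exact hy' | simpa [hP.seller_ne, hP.seller_ne.symm]

lemma IsInducedPath.dem_le_sup (hP : IsInducedPath L b t u s) (hpos : PosOn L st)
    (hmin : ∀ l ∈ L, PathClosed (reduceAfter L st l)) (hxy : (x, y) ∈ L) (hyt : y ≠ t)
    (hys : y ≠ s) (hx : x = b ∨ x = u) : st.dem x ≤ st.sup y := by
  by_contra! h
  obtain ⟨hb, ht⟩ := hpos _ hP.1
  obtain ⟨hu, hs⟩ := hpos _ hP.2.2.1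
  have hx' : 0 < (trade st (x, y)).dem x := by simpa using h
  apply hP.not_survives hmin hxy (by simp [hyt]) (by simp [hyt]) (by simp [hys])
    _ (by simpa [Ne.symm hyt]) _ (by simpa [Ne.symm hys])
  all_goals rcases hx with rfl | rfl
  all_goals first | exact hx' | simpa [hP.buyer_ne, hP.buyer_ne.symm]

/-- Otherwise `s` would be the only seller of `x`, as every link touches the path. -/
lemma IsInducedPath.mem_of_mem_right (hP : IsInducedPath L b t u s) (hgood : ClearsAll L st)
    (hpos : PosOn L st) (hmin : ∀ l ∈ L, PathClosed (reduceAfter L st l)) (hxs : (x, s) ∈ L)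
    (hxu : x ≠ u) : (x, t) ∈ L := by
  by_contra hxt
  have hxb : x ≠ b := by rintro rfl; exact hP.2.2.2 hxs
  obtain ⟨hu, hs⟩ := hpos _ hP.2.2.1
  refine (hP.sup_le_dem hpos hmin hxs hxb hxu (.inr rfl)).not_gt
    (hgood.dem_lt_sup_of_pendant hP.2.2.1 hxs hxu hu hs fun y hxy => ?_)
  rcases hP.touches hpos hmin hxy with h | h | rfl | h
  exacts [(hxb h).elim, (hxu h).elim, (hxt hxy).elim, h]

lemma IsInducedPath.mem_of_mem_left (hP : IsInducedPath L b t u s) (hgood : ClearsAll L st)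
    (hpos : PosOn L st) (hmin : ∀ l ∈ L, PathClosed (reduceAfter L st l)) (hby : (b, y) ∈ L)
    (hyt : y ≠ t) : (u, y) ∈ L := by
  by_contra huy
  have hys : y ≠ s := by rintro rfl; exact hP.2.2.2 hby
  obtain ⟨hb, ht⟩ := hpos _ hP.1
  refine (hP.dem_le_sup hpos hmin hby hyt hys (.inl rfl)).not_gt
    (hgood.sup_lt_dem_of_pendant hP.1 hby hyt hb ht fun x hxy => ?_)
  rcases hP.touches hpos hmin hxy with h | rfl | h | h
  exacts [h, (huy hxy).elim, (hyt h).elim, (hys h).elim]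

end InducedPath

section Induction

variable {B S : Type*} [DecidableEq B] [DecidableEq S] {L : Finset (B × S)} {st : TState B S}

lemma ClearsAll.pathClosed_of_forall_reduceAfter (hgood : ClearsAll L st) (hst : st.Nonneg)
    (hpos : PosOn L st) (hmin : ∀ l ∈ L, PathClosed (reduceAfter L st l)) : PathClosed L := by
  intro b t u s hbt hut hus
  by_contra hbs
  have hP : IsInducedPath L b t u s := ⟨hbt, hut, hus, hbs⟩
  obtain ⟨hb, -⟩ := hpos _ hbt
  obtain ⟨-, hs⟩ := hpos _ hus
  by_cases hX : ∃ x, (x, s) ∈ L ∧ x ≠ u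
  · obtain ⟨x, hxs, hxu⟩ := hX
    have hQ : IsInducedPath L b t x s :=
      ⟨hbt, hP.mem_of_mem_right hgood hpos hmin hxs hxu, hxs, hbs⟩
    -- a second seller of `b` would also sell to `u`, a link missing the induced path `hQ`
    have hsole : ∀ y, (b, y) ∈ L → y = t := by
      intro y hby
      by_contra hyt
      rcases hQ.touches hpos hmin (hP.mem_of_mem_left hgood hpos hmin hby hyt) with
        h | h | h | rfl
      exacts [hP.buyer_ne h.symm, hxu h.symm, hyt h, hbs hby]
    exact (hQ.sup_le_dem hpos hmin hut hP.buyer_ne.symm hxu.symm (.inl rfl)).not_gt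
      (hgood.dem_lt_sup_of_sole_seller hst hut hP.buyer_ne hb hsole)
  · have hsole : ∀ x, (x, s) ∈ L → x = u := fun x hxs =>
      Classical.byContradiction fun hxu => hX ⟨x, hxs, hxu⟩
    refine (hgood.sup_lt_dem_of_sole_buyer hst hut hP.seller_ne.symm hs hsole).not_ge ?_
    by_cases hY : ∃ y, (b, y) ∈ L ∧ y ≠ t
    · obtain ⟨y, hby, hyt⟩ := hY
      have hQ : IsInducedPath L b y u s :=
        ⟨hby, hP.mem_of_mem_left hgood hpos hmin hby hyt, hus, hbs⟩
      exact hQ.dem_le_sup hpos hmin hut hyt.symm hP.seller_ne (.inr rfl)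
    · refine (hgood.dem_lt_sup_of_sole_seller hst hut hP.buyer_ne hb fun y hby => ?_).le
      exact Classical.byContradiction fun hyt => hY ⟨y, hby, hyt⟩

theorem ClearsAll.pathClosed (hgood : ClearsAll L st) (hst : st.Nonneg) (hpos : PosOn L st) :
    PathClosed L := by
  induction L using Finset.strongInduction generalizing st with
  | H L ih =>
    exact hgood.pathClosed_of_forall_reduceAfter hst hpos fun l hl =>
      ih _ (reduceAfter_ssubset hl) (hgood.reduce hst hl) (hst.trade l) posOn_reduceAfter

end Induction

section Components

variable {B S : Type*} [Fintype B] [Fintype S] [DecidableEq B] [DecidableEq S]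
  {L : Finset (B × S)} {st : TState B S} {σ : List (B × S)}

lemma sum_dem_component_runSession (hσ : σ.Perm L.toList) (v : B ⊕ S)
    (hbal : ∑ b ∈ Finset.univ.filter (fun b => (linkGraph L).Reachable v (.inl b)), st.dem b
      = ∑ s ∈ Finset.univ.filter (fun s => (linkGraph L).Reachable v (.inr s)), st.sup s) :
    ∑ b ∈ Finset.univ.filter (fun b => (linkGraph L).Reachable v (.inl b)),
        (runSession st σ).dem b
      = ∑ s ∈ Finset.univ.filter (fun s => (linkGraph L).Reachable v (.inr s)),
        (runSession st σ).sup s := by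
  refine sub_eq_zero.mp ((sum_dem_sub_sum_sup_runSession fun l hl => ?_).trans
    (sub_eq_zero.mpr hbal))
  have hadj : (linkGraph L).Adj (.inl l.1) (.inr l.2) :=
    linkGraph_adj_inl_inr.mpr (Finset.mem_toList.mp (hσ.subset hl))
  simp only [Finset.mem_filter, Finset.mem_univ, true_and]
  exact ⟨fun h => h.trans hadj.reachable, fun h => h.trans hadj.symm.reachable⟩

end Components

/-- Main theorem: with strictly positive demands and supplies and component-wise
supply equal to demand, every trading session is feasible iff every connected
component is complete bipartite. -/
theorem stmt_6 {B S : Type*} [Fintype B] [Fintype S] [DecidableEq B] [DecidableEq S]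
    (L : Finset (B × S)) (D : B → ℝ) (Sup : S → ℝ)
    (hD : ∀ b, 0 < D b) (hS : ∀ s, 0 < Sup s)
    (hbal : ∀ v : B ⊕ S,
      ∑ b ∈ Finset.univ.filter (fun b => (linkGraph L).Reachable v (Sum.inl b)), D b
        = ∑ s ∈ Finset.univ.filter (fun s => (linkGraph L).Reachable v (Sum.inr s)), Sup s) :
    (∀ seq : List (B × S), seq.Perm L.toList →
        ∀ b, (runSession ⟨D, Sup⟩ seq).dem b = 0)
      ↔ (∀ b s, (linkGraph L).Reachable (Sum.inl b) (Sum.inr s) → (b, s) ∈ L) := by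
  have hst : (⟨D, Sup⟩ : TState B S).Nonneg := ⟨fun b => (hD b).le, fun s => (hS s).le⟩
  constructor
  · intro hfeas b s
    refine ClearsAll.pathClosed (fun σ hσ => ⟨hfeas σ hσ, fun s => ?_⟩) hst
      (fun l _ => ⟨hD l.1, hS l.2⟩) |>.mem_of_reachable
    have hsum := sum_dem_component_runSession (st := ⟨D, Sup⟩) hσ (.inr s) (hbal (.inr s))
    rw [Finset.sum_eq_zero fun b _ => hfeas σ hσ b, eq_comm,
      Finset.sum_eq_zero_iff_of_nonneg fun s _ => (hst.runSession σ).2 s] at hsum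
    exact hsum s (by simp)
  · intro hcomplete σ hσ b
    by_contra hb
    have hsup : ∀ s ∈ Finset.univ.filter fun s => (linkGraph L).Reachable (.inl b) (.inr s),
        (runSession ⟨D, Sup⟩ σ).sup s = 0 := fun s hs =>
      (runSession_dem_eq_zero_or_sup_eq_zero hst (hσ.mem_iff.mpr (Finset.mem_toList.mpr
        (hcomplete b s (Finset.mem_filter.mp hs).2)))).resolve_left hb
    have hsum := sum_dem_component_runSession (st := ⟨D, Sup⟩) hσ (.inl b) (hbal (.inl b))
    rw [Finset.sum_eq_zero hsup,
      Finset.sum_eq_zero_iff_of_nonneg fun b _ => (hst.runSession σ).1 b] at hsum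
    exact hb (hsum b (by simp))
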